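/- Let h : [0,1] → [0,1] be strictly increasing, continuous, with h(0)=0, h(1)=1, twice continuously differentiable at p₀ ∈ (0,1) with h'(p₀) > 0 and h''(p₀) < 0. Then the probability premium μ(ε₁) defined by h(p₀−ε₁) − 2h(p₀−μ) + h(p₀+ε₁) = 0 satisfies: μ is differentiable from the right at ε₁ = 0 with μ'(0⁺) = 0, and lim_{ε₁→0⁺} μ(ε₁)/ε₁² = −h''(p₀)/(2h'(p₀)) > 0. -/

import Mathlib

open Set Filter Topology Asymptotics

/-!
Expanding `h` to second order at `p₀`, the defining equation of `μ` reads
`2 h'(p₀) μ + h''(p₀) ε² - h''(p₀) μ² = o(ε²)`; the remainder at `p₀ - μ` is `o(ε²)` because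
`|μ| ≤ ε`. This first forces `μ = O(ε²)`, hence `μ² = o(ε²)`, and then
`μ / ε² → -h''(p₀) / (2 h'(p₀))`; in particular `μ / ε → 0`.
-/

theorem ContDiffAt.isLittleO_taylor_two {f : ℝ → ℝ} {x₀ : ℝ} (hf : ContDiffAt ℝ 2 f x₀) :
    (fun x => f x - (f x₀ + deriv f x₀ * (x - x₀) + deriv (deriv f) x₀ / 2 * (x - x₀) ^ 2))
      =o[𝓝 x₀] fun x => (x - x₀) ^ 2 := by
  obtain ⟨u, hu, hfu⟩ := hf.contDiffOn le_rfl (by simp)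
  obtain ⟨r, hr, hball⟩ := Metric.mem_nhds_iff.1 hu
  have hx₀ : x₀ ∈ Metric.ball x₀ r := Metric.mem_ball_self hr
  have htaylor := taylor_isLittleO (convex_ball x₀ r) hx₀ (hfu.mono hball)
  rw [nhdsWithin_eq_nhds.2 (Metric.ball_mem_nhds x₀ hr)] at htaylor
  refine htaylor.congr_left fun x => ?_
  have hder (n : ℕ) := iteratedDerivWithin_of_isOpen (n := n) (f := f) Metric.isOpen_ball hx₀
  simp [taylor_within_apply, hder, iteratedDeriv_succ]
  ring

theorem Asymptotics.IsLittleO.comp_sq_of_abs_sub_le {R u : ℝ → ℝ} {x₀ : ℝ} {l : Filter ℝ}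
    (hl : l ≤ 𝓝 0) (hR : R =o[𝓝 x₀] fun x => (x - x₀) ^ 2)
    (hu : ∀ᶠ x in l, |u x - x₀| ≤ |x|) :
    (fun x => R (u x)) =o[l] fun x => x ^ 2 := by
  have hlim : Tendsto u l (𝓝 x₀) := by
    rw [← tendsto_sub_nhds_zero_iff]
    exact squeeze_zero_norm' hu (by simpa using (tendsto_id.mono_left hl).abs)
  have hsq : (fun x => (u x - x₀) ^ 2) =O[l] fun x => x ^ 2 :=
    (IsBigO.of_bound' <| hu.mono fun x hx => by simpa only [Real.norm_eq_abs] using hx).pow 2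
  exact (hR.comp_tendsto hlim).trans_isBigO hsq

theorem tendsto_div_sq_of_isLittleO {l : Filter ℝ} (hl : l ≤ 𝓝[≠] 0) {m : ℝ → ℝ} {a b : ℝ}
    (ha : a ≠ 0) (hm : ∀ᶠ x in l, |m x| ≤ |x|)
    (hkey : (fun x => 2 * a * m x + b * x ^ 2 - b * m x ^ 2) =o[l] fun x => x ^ 2) :
    Tendsto (fun x => m x / x ^ 2) l (𝓝 (-b / (2 * a))) := by
  have hne : ∀ᶠ x in l, x ≠ 0 := eventually_mem_nhdsWithin.filter_mono hl
  have hm_sq : (fun x => m x ^ 2) =O[l] fun x => x ^ 2 :=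
    (IsBigO.of_bound' <| hm.mono fun x hx => by simpa only [Real.norm_eq_abs] using hx).pow 2
  have hm_bigO : m =O[l] fun x => x ^ 2 := by
    rw [← isBigO_const_mul_left_iff (mul_ne_zero two_ne_zero ha)]
    refine ((hkey.isBigO.sub ((isBigO_refl _ _).const_mul_left b)).add
      (hm_sq.const_mul_left b)).congr_left fun x => ?_
    ring
  have hm_littleO : m =o[l] fun _ => (1 : ℝ) := by
    rw [isLittleO_one_iff]
    exact squeeze_zero_norm' hm
      (by simpa using (tendsto_id.mono_left (hl.trans nhdsWithin_le_nhds)).abs)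
  -- `m = O(x²)` and `m → 0` give `m² = o(x²)`, so the quadratic term drops out of `hkey`.
  have hm_sq_littleO : (fun x => m x ^ 2) =o[l] fun x => x ^ 2 :=
    (hm_bigO.mul_isLittleO hm_littleO).congr (fun x => (sq (m x)).symm) fun x => mul_one _
  have hlin : (fun x => 2 * a * m x + b * x ^ 2) =o[l] fun x => x ^ 2 :=
    (hkey.add (hm_sq_littleO.const_mul_left b)).congr_left fun x => by ring
  have hsq_ne : ∀ᶠ x in l, x ^ 2 = 0 → 2 * a * m x + b * x ^ 2 = 0 :=
    hne.mono fun x hx h0 => (hx (pow_eq_zero_iff two_ne_zero |>.1 h0)).elim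
  rw [isLittleO_iff_tendsto' hsq_ne] at hlin
  have := (hlin.div_const (2 * a)).add_const (-b / (2 * a))
  rw [zero_div, zero_add] at this
  refine this.congr' (hne.mono fun x hx => ?_)
  field_simp
  ring

theorem tendsto_div_of_tendsto_div_sq {l : Filter ℝ} (hl : l ≤ 𝓝[≠] 0) {m : ℝ → ℝ} {L : ℝ}
    (hm : Tendsto (fun x => m x / x ^ 2) l (𝓝 L)) : Tendsto (fun x => m x / x) l (𝓝 0) := by
  have := (tendsto_id.mono_left (hl.trans nhdsWithin_le_nhds)).mul hm
  rw [zero_mul] at this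
  refine this.congr' ((eventually_mem_nhdsWithin.filter_mono hl).mono fun x (hx : x ≠ 0) => ?_)
  simp only [id]
  field_simp

theorem stmt_2_general (h : ℝ → ℝ)
    (p₀ : ℝ)
    (hC2 : ContDiffAt ℝ 2 h p₀)
    (hd : 0 < deriv h p₀) (hdd : deriv (deriv h) p₀ < 0)
    (μ : ℝ → ℝ) (δ : ℝ) (hδ : 0 < δ)
    (hμbd : ∀ ε₁ ∈ Ioo (0:ℝ) δ, μ ε₁ ∈ Icc (-ε₁) ε₁)
    (hμeq : ∀ ε₁ ∈ Ioo (0:ℝ) δ,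
      h (p₀ - ε₁) - 2 * h (p₀ - μ ε₁) + h (p₀ + ε₁) = 0) :
    Tendsto (fun ε₁ => μ ε₁ / ε₁) (nhdsWithin 0 (Ioi 0)) (nhds 0) ∧
    Tendsto (fun ε₁ => μ ε₁ / ε₁^2) (nhdsWithin 0 (Ioi 0))
      (nhds (-(deriv (deriv h) p₀) / (2 * deriv h p₀))) ∧
    0 < -(deriv (deriv h) p₀) / (2 * deriv h p₀) := by
  have hsmall : ∀ᶠ ε in 𝓝[>] 0, ε ∈ Ioo 0 δ := Ioo_mem_nhdsGT hδ
  have hμ_le : ∀ᶠ ε in 𝓝[>] 0, |μ ε| ≤ |ε| :=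
    hsmall.mono fun ε hε => (abs_le.2 (hμbd ε hε)).trans (le_abs_self ε)
  have hR {u : ℝ → ℝ} (hu : ∀ᶠ ε in 𝓝[>] 0, |u ε - p₀| ≤ |ε|) :=
    hC2.isLittleO_taylor_two.comp_sq_of_abs_sub_le nhdsWithin_le_nhds hu
  have hkey : (fun ε => 2 * deriv h p₀ * μ ε + deriv (deriv h) p₀ * ε ^ 2
      - deriv (deriv h) p₀ * μ ε ^ 2) =o[𝓝[>] 0] fun ε => ε ^ 2 := by
    refine ((((hR (u := (p₀ - μ ·)) ?_).const_mul_left 2).sub (hR (u := (p₀ - ·)) ?_)).sub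
      (hR (u := (p₀ + ·)) ?_)).congr' ?_ EventuallyEq.rfl
    · simpa using hμ_le
    · simp
    · simp
    · filter_upwards [hsmall] with ε hε
      linear_combination -hμeq ε hε
  have hlim := tendsto_div_sq_of_isLittleO (nhdsGT_le_nhdsNE 0) hd.ne' hμ_le hkey
  exact ⟨tendsto_div_of_tendsto_div_sq (nhdsGT_le_nhdsNE 0) hlim, hlim,
    div_pos (neg_pos.2 hdd) (mul_pos two_pos hd)⟩

theorem stmt_2 (h : ℝ → ℝ)
    (hmono : StrictMonoOn h (Icc 0 1))
    (hcont : ContinuousOn h (Icc 0 1))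
    (hmaps : MapsTo h (Icc 0 1) (Icc 0 1))
    (h0 : h 0 = 0) (h1 : h 1 = 1)
    (p₀ : ℝ) (hp₀ : p₀ ∈ Ioo (0:ℝ) 1)
    (hC2 : ContDiffAt ℝ 2 h p₀)
    (hd : 0 < deriv h p₀) (hdd : deriv (deriv h) p₀ < 0)
    (μ : ℝ → ℝ) (δ : ℝ) (hδ : 0 < δ)
    (hμbd : ∀ ε₁ ∈ Ioo (0:ℝ) δ, μ ε₁ ∈ Icc (-ε₁) ε₁)
    (hμeq : ∀ ε₁ ∈ Ioo (0:ℝ) δ,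
      h (p₀ - ε₁) - 2 * h (p₀ - μ ε₁) + h (p₀ + ε₁) = 0) :
    Tendsto (fun ε₁ => μ ε₁ / ε₁) (nhdsWithin 0 (Ioi 0)) (nhds 0) ∧
    Tendsto (fun ε₁ => μ ε₁ / ε₁^2) (nhdsWithin 0 (Ioi 0))
      (nhds (-(deriv (deriv h) p₀) / (2 * deriv h p₀))) ∧
    0 < -(deriv (deriv h) p₀) / (2 * deriv h p₀) :=
  stmt_2_general h p₀ hC2 hd hdd μ δ hδ hμbd hμeq
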